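/- Let C be an abelian category and 𝒲 a class of objects of C closed under isomorphisms and finite direct sums. Let 0→X→Y→Z→0 be a short exact sequence in C that is both Hom(𝒲,−)-exact and Hom(−,𝒲)-exact, and suppose Y belongs to the Gorenstein category G(𝒲). Then X belongs to G(𝒲) if and only if Z belongs to G(𝒲). -/

import Mathlib

open CategoryTheory Category Limits

universe v u

variable {C : Type u} [Category.{v} C] [Abelian C]

def SES {A B X : C} (f : A ⟶ B) (g : B ⟶ X) : Prop :=
  ∃ w : f ≫ g = 0, (CategoryTheory.ShortComplex.mk f g w).ShortExact

def CovExact (𝒲 : Set C) {A B X : C} (f : A ⟶ B) (g : B ⟶ X) : Prop :=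
  ∀ W ∈ 𝒲,
    (Function.Injective fun u : W ⟶ A => u ≫ f) ∧
    (∀ v : W ⟶ B, v ≫ g = 0 → ∃ u : W ⟶ A, u ≫ f = v) ∧
    (Function.Surjective fun v : W ⟶ B => v ≫ g)

def ContraExact (𝒲 : Set C) {A B X : C} (f : A ⟶ B) (g : B ⟶ X) : Prop :=
  ∀ W ∈ 𝒲,
    (Function.Injective fun u : X ⟶ W => g ≫ u) ∧
    (∀ v : B ⟶ W, f ≫ v = 0 → ∃ u : X ⟶ W, g ≫ u = v) ∧
    (Function.Surjective fun v : B ⟶ W => f ≫ v)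

/-- A proper `𝒲`-resolution of `A` with terms `W i`: short exact sequences
`0 ⟶ K (i+1) ⟶ W i ⟶ K i ⟶ 0` with `K 0 = A`, each `W i ∈ 𝒲`, each `Hom(𝒲,-)`-exact. -/
structure ProperResolution (𝒲 : Set C) (A : C) (W : ℕ → C) where
  K : ℕ → C
  hK : K 0 = A
  g : ∀ i, K (i + 1) ⟶ W i
  f : ∀ i, W i ⟶ K i
  mem : ∀ i, W i ∈ 𝒲
  ses : ∀ i, SES (g i) (f i)
  proper : ∀ i, CovExact 𝒲 (g i) (f i)

/-- The proper resolution is in addition `Hom(-,𝒲)`-exact. -/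
def ProperResolution.IsContraExact {𝒲 : Set C} {A : C} {W : ℕ → C}
    (R : ProperResolution 𝒲 A W) : Prop :=
  ∀ i, ContraExact 𝒲 (R.g i) (R.f i)

/-- A coproper `𝒲`-coresolution of `A` with terms `W i`: short exact sequences
`0 ⟶ K i ⟶ W i ⟶ K (i+1) ⟶ 0` with `K 0 = A`, each `W i ∈ 𝒲`, each `Hom(-,𝒲)`-exact. -/
structure CoproperCoresolution (𝒲 : Set C) (A : C) (W : ℕ → C) where
  K : ℕ → C
  hK : K 0 = A
  g : ∀ i, K i ⟶ W i
  f : ∀ i, W i ⟶ K (i + 1)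
  mem : ∀ i, W i ∈ 𝒲
  ses : ∀ i, SES (g i) (f i)
  coproper : ∀ i, ContraExact 𝒲 (g i) (f i)

/-- The coproper coresolution is in addition `Hom(𝒲,-)`-exact. -/
def CoproperCoresolution.IsCovExact {𝒲 : Set C} {A : C} {W : ℕ → C}
    (R : CoproperCoresolution 𝒲 A W) : Prop :=
  ∀ i, CovExact 𝒲 (R.g i) (R.f i)

/-- Membership in the Gorenstein category `G(𝒲)`: `X` admits both a proper `𝒲`-resolution
which is `Hom(-,𝒲)`-exact and a coproper `𝒲`-coresolution which is `Hom(𝒲,-)`-exact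
(i.e. a complete `𝒲`-resolution). -/
def MemGW (𝒲 : Set C) (X : C) : Prop :=
  (∃ (W : ℕ → C) (R : ProperResolution 𝒲 X W), R.IsContraExact) ∧
  (∃ (W : ℕ → C) (R : CoproperCoresolution 𝒲 X W), R.IsCovExact)

/-! Resolutions are built coinductively: if every object of a class `S` is the end of a biexact
step `0 → K → W → A → 0` with `W ∈ 𝒲` and `K ∈ S`, then every object of `S` has a resolution by
biexact sequences. Two constructions provide the steps. The horseshoe lemma, with `W_A ⊕ W_C` as
the middle term, shows that an extension of two objects with biexact resolutions has one. The
kernel of the composite `W_Y → Y → Z` of two biexact epimorphisms is an extension of `X` by a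
syzygy of `Y`, so `Z` inherits a resolution from `X` and `Y`. The case of `X` is reduced to the
quotient case by a pullback, and coresolutions are resolutions in `Cᵒᵖ`, where the roles of `X`
and `Z` are exchanged. -/

namespace SES

variable {A B Z : C} {f : A ⟶ B} {g : B ⟶ Z}

lemma w (h : SES f g) : f ≫ g = 0 := h.1

lemma w_assoc (h : SES f g) {T : C} (t : Z ⟶ T) : f ≫ g ≫ t = 0 := by
  rw [← assoc, h.w, zero_comp]

lemma mono (h : SES f g) : Mono f := h.2.mono_f

lemma epi (h : SES f g) : Epi g := h.2.epi_g

lemma lift (h : SES f g) {T : C} (v : T ⟶ B) (hv : v ≫ g = 0) : ∃ u : T ⟶ A, u ≫ f = v := by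
  obtain ⟨u, hu⟩ := KernelFork.IsLimit.lift' h.2.fIsKernel v hv
  exact ⟨u, by simpa using hu⟩

lemma desc (h : SES f g) {T : C} (v : B ⟶ T) (hv : f ≫ v = 0) : ∃ u : Z ⟶ T, g ≫ u = v := by
  obtain ⟨u, hu⟩ := CokernelCofork.IsColimit.desc' h.2.gIsCokernel v hv
  exact ⟨u, by simpa using hu⟩

lemma of_lift (w : f ≫ g = 0) [Mono f] [Epi g]
    (hlift : ∀ {T : C} (t : T ⟶ B), t ≫ g = 0 → ∃ u : T ⟶ A, u ≫ f = t) : SES f g :=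
  ⟨w, .mk' (ShortComplex.exact_of_f_is_kernel _ (KernelFork.IsLimit.ofι' f w
    fun t ht => ⟨(hlift t ht).choose, (hlift t ht).choose_spec⟩)) ‹_› ‹_›⟩

lemma of_splitting {S : ShortComplex C} (s : S.Splitting) : SES S.f S.g :=
  ⟨S.zero, s.shortExact⟩

lemma kernel_ι (g : B ⟶ Z) [Epi g] : SES (kernel.ι g) g :=
  of_lift (kernel.condition g) fun t ht => ⟨kernel.lift g t ht, kernel.lift_ι g t ht⟩

lemma op (h : SES f g) : SES g.op f.op :=
  ⟨by rw [← op_comp, h.w, op_zero], h.2.op⟩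

end SES

lemma SES.unop {A B Z : Cᵒᵖ} {f : A ⟶ B} {g : B ⟶ Z} (h : SES f g) : SES g.unop f.unop :=
  ⟨by rw [← unop_comp, h.w, unop_zero], h.2.unop⟩

structure Biexact (𝒲 : Set C) {A B Z : C} (f : A ⟶ B) (g : B ⟶ Z) : Prop where
  ses : SES f g
  cov : CovExact 𝒲 f g
  contra : ContraExact 𝒲 f g

namespace Biexact

variable {𝒲 : Set C} {A B Z : C} {f : A ⟶ B} {g : B ⟶ Z}

lemma mk' (h : SES f g) (hlift : ∀ W ∈ 𝒲, ∀ v : W ⟶ Z, ∃ u : W ⟶ B, u ≫ g = v)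
    (hextend : ∀ W ∈ 𝒲, ∀ v : A ⟶ W, ∃ u : B ⟶ W, f ≫ u = v) : Biexact 𝒲 f g := by
  have := h.mono
  have := h.epi
  exact ⟨h,
    fun W hW => ⟨fun _ _ huv => (cancel_mono f).1 huv, fun v hv => h.lift v hv, hlift W hW⟩,
    fun W hW => ⟨fun _ _ huv => (cancel_epi g).1 huv, fun v hv => h.desc v hv, hextend W hW⟩⟩

lemma lift (h : Biexact 𝒲 f g) {W : C} (hW : W ∈ 𝒲) (v : W ⟶ Z) : ∃ u : W ⟶ B, u ≫ g = v :=
  (h.cov W hW).2.2 v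

lemma extend (h : Biexact 𝒲 f g) {W : C} (hW : W ∈ 𝒲) (v : A ⟶ W) : ∃ u : B ⟶ W, f ≫ u = v :=
  (h.contra W hW).2.2 v

lemma of_splitting {S : ShortComplex C} (s : S.Splitting) : Biexact 𝒲 S.f S.g :=
  mk' (SES.of_splitting s) (fun _ _ v => ⟨v ≫ s.s, by simp⟩) (fun _ _ v => ⟨s.r ≫ v, by simp⟩)

lemma op (h : Biexact 𝒲 f g) : Biexact 𝒲.op g.op f.op :=
  mk' h.ses.op
    (fun _ hW v => let ⟨u, hu⟩ := h.extend hW v.unop; ⟨u.op, Quiver.Hom.unop_inj hu⟩)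
    (fun _ hW v => let ⟨u, hu⟩ := h.lift hW v.unop; ⟨u.op, Quiver.Hom.unop_inj hu⟩)

end Biexact

lemma Biexact.unop {𝒲 : Set C} {A B Z : Cᵒᵖ} {f : A ⟶ B} {g : B ⟶ Z} (h : Biexact 𝒲.op f g) :
    Biexact 𝒲 g.unop f.unop :=
  mk' h.ses.unop
    (fun W hW v =>
      let ⟨u, hu⟩ := h.extend (W := Opposite.op W) hW v.op
      ⟨u.unop, Quiver.Hom.op_inj hu⟩)
    (fun W hW v =>
      let ⟨u, hu⟩ := h.lift (W := Opposite.op W) hW v.op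
      ⟨u.unop, Quiver.Hom.op_inj hu⟩)

def ClosedUnderBiprod (𝒲 : Set C) : Prop :=
  ∀ ⦃U V : C⦄, U ∈ 𝒲 → V ∈ 𝒲 → ∃ b : BinaryBicone U V, Nonempty b.IsBilimit ∧ b.pt ∈ 𝒲

lemma closedUnderBiprod_of_biprod_mem {𝒲 : Set C}
    (h : ∀ {U V : C}, U ∈ 𝒲 → V ∈ 𝒲 → (U ⊞ V) ∈ 𝒲) : ClosedUnderBiprod 𝒲 :=
  fun U V hU hV => ⟨BinaryBiproduct.bicone U V, ⟨BinaryBiproduct.isBilimit U V⟩, h hU hV⟩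

lemma ClosedUnderBiprod.op {𝒲 : Set C} (h : ClosedUnderBiprod 𝒲) : ClosedUnderBiprod 𝒲.op :=
  fun _ _ hU hV =>
    let ⟨b, ⟨hb⟩, hpt⟩ := h hU hV
    ⟨b.op, ⟨hb.op⟩, hpt⟩

def HasBiexactRes (𝒲 : Set C) (A : C) : Prop :=
  ∃ (W : ℕ → C) (R : ProperResolution 𝒲 A W), R.IsContraExact

def HasBiexactCores (𝒲 : Set C) (A : C) : Prop :=
  ∃ (W : ℕ → C) (R : CoproperCoresolution 𝒲 A W), R.IsCovExact

def BiexactStep (𝒲 : Set C) (S : C → Prop) (A : C) : Prop :=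
  ∃ (W K : C) (g : K ⟶ W) (f : W ⟶ A), W ∈ 𝒲 ∧ S K ∧ Biexact 𝒲 g f

namespace HasBiexactRes

variable {𝒲 : Set C} {A : C}

lemma coinduct {S : C → Prop} (hS : ∀ A, S A → BiexactStep 𝒲 S A) (hA : S A) :
    HasBiexactRes 𝒲 A := by
  choose W K g f hW hK h using hS
  let K' : ℕ → {K : C // S K} := fun n => Nat.rec ⟨A, hA⟩ (fun _ p => ⟨K p.1 p.2, hK p.1 p.2⟩) n
  exact ⟨fun n => W (K' n).1 (K' n).2,
    { K := fun n => (K' n).1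
      hK := rfl
      g := fun i => g (K' i).1 (K' i).2
      f := fun i => f (K' i).1 (K' i).2
      mem := fun i => hW _ _
      ses := fun i => (h _ _).ses
      proper := fun i => (h _ _).cov },
    fun i => (h _ _).contra⟩

lemma step (h : HasBiexactRes 𝒲 A) : BiexactStep 𝒲 (HasBiexactRes 𝒲) A := by
  obtain ⟨W, ⟨K, rfl, g, f, mem, ses, proper⟩, contra⟩ := h
  exact ⟨W 0, K 1, g 0, f 0, mem 0,
    ⟨fun n => W (n + 1),
      ⟨fun n => K (n + 1), rfl, fun i => g (i + 1), fun i => f (i + 1), fun i => mem (i + 1),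
        fun i => ses (i + 1), fun i => proper (i + 1)⟩,
      fun i => contra (i + 1)⟩,
    ⟨ses 0, proper 0, contra 0⟩⟩

lemma of_step (h : BiexactStep 𝒲 (HasBiexactRes 𝒲) A) : HasBiexactRes 𝒲 A :=
  coinduct (S := BiexactStep 𝒲 (HasBiexactRes 𝒲))
    (fun _ ⟨W, K, g, f, hW, hK, hgf⟩ => ⟨W, K, g, f, hW, hK.step, hgf⟩) h

lemma of_mem (h𝒲 : ClosedUnderBiprod 𝒲) (hA : A ∈ 𝒲) : HasBiexactRes 𝒲 A := by
  refine coinduct (S := (· ∈ 𝒲)) (fun B hB => ?_) hA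
  obtain ⟨b, ⟨hb⟩, hpt⟩ := h𝒲 hB hB
  exact ⟨b.pt, B, b.inl, b.snd, hpt, hB, Biexact.of_splitting (S := .mk b.inl b.snd b.inl_snd)
    { r := b.fst, s := b.inr, f_r := b.inl_fst, s_g := b.inr_snd, id := IsBilimit.binary_total hb }⟩

end HasBiexactRes

section Duality

variable {𝒲 : Set C} {A : C}

lemma HasBiexactCores.op (h : HasBiexactCores 𝒲 A) : HasBiexactRes 𝒲.op (Opposite.op A) := by
  obtain ⟨W, R, hR⟩ := h
  have hb (i : ℕ) : Biexact 𝒲 (R.g i) (R.f i) := ⟨R.ses i, hR i, R.coproper i⟩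
  exact ⟨fun n => Opposite.op (W n),
    { K := fun n => Opposite.op (R.K n)
      hK := congrArg Opposite.op R.hK
      g := fun i => (R.f i).op
      f := fun i => (R.g i).op
      mem := R.mem
      ses := fun i => (hb i).op.ses
      proper := fun i => (hb i).op.cov },
    fun i => (hb i).op.contra⟩

lemma HasBiexactCores.of_res_op (h : HasBiexactRes 𝒲.op (Opposite.op A)) :
    HasBiexactCores 𝒲 A := by
  obtain ⟨W, R, hR⟩ := h
  have hb (i : ℕ) : Biexact 𝒲.op (R.g i) (R.f i) := ⟨R.ses i, R.proper i, hR i⟩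
  exact ⟨fun n => (W n).unop,
    { K := fun n => (R.K n).unop
      hK := congrArg Opposite.unop R.hK
      g := fun i => (R.f i).unop
      f := fun i => (R.g i).unop
      mem := R.mem
      ses := fun i => (hb i).unop.ses
      coproper := fun i => (hb i).unop.contra },
    fun i => (hb i).unop.cov⟩

end Duality

namespace Biexact

variable {𝒲 : Set C} {A B Z : C} {f : A ⟶ B} {g : B ⟶ Z}

lemma pullback (h : Biexact 𝒲 f g) {P D : C} {fst : P ⟶ B} {snd : P ⟶ D} {d : D ⟶ Z}
    (hP : IsPullback fst snd g d) : ∃ m : A ⟶ P, m ≫ fst = f ∧ Biexact 𝒲 m snd := by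
  have := h.ses.mono
  have := h.ses.epi
  have : Epi snd := Abelian.epi_snd_of_isLimit g d hP.isLimit
  obtain ⟨m, hmf, hm0⟩ : ∃ m : A ⟶ P, m ≫ fst = f ∧ m ≫ snd = 0 :=
    ⟨hP.lift f 0 (by rw [h.ses.w, zero_comp]), hP.lift_fst _ _ _, hP.lift_snd _ _ _⟩
  have : Mono m := mono_of_mono_fac hmf
  refine ⟨m, hmf, mk' (SES.of_lift hm0 fun t ht => ?_) (fun W hW v => ?_) (fun W hW v => ?_)⟩
  · obtain ⟨u, hu⟩ := h.ses.lift (t ≫ fst) (by rw [assoc, hP.w, ← assoc, ht, zero_comp])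
    exact ⟨u, hP.hom_ext (by rw [assoc, hmf, hu]) (by rw [assoc, hm0, comp_zero, ht])⟩
  · obtain ⟨u, hu⟩ := h.lift hW (v ≫ d)
    exact ⟨hP.lift u v hu, hP.lift_snd _ _ _⟩
  · obtain ⟨u, hu⟩ := h.extend hW v
    exact ⟨fst ≫ u, by rw [← assoc, hmf, hu]⟩

end Biexact

lemma SES.exists_biexact_of_section {𝒲 : Set C} {A B Z : C} {f : A ⟶ B} {g : B ⟶ Z}
    (h : SES f g) {s : Z ⟶ B} (hs : s ≫ g = 𝟙 Z) : ∃ r : B ⟶ A, Biexact 𝒲 s r := by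
  have := h.mono
  let σ := ShortComplex.Splitting.ofExactOfSection (.mk f g h.w) h.2.exact s hs this
  exact ⟨σ.r, Biexact.of_splitting (S := .mk s σ.r σ.s_r)
    { r := g, s := f, f_r := hs, s_g := σ.f_r, id := by rw [add_comm]; exact σ.id }⟩

lemma SES.kernel_comp {W B Q K D M : C} {ι : W ⟶ B} {p : B ⟶ Q} {k : K ⟶ D} {e : D ⟶ B}
    {κ : M ⟶ D} {j : K ⟶ M} {π : M ⟶ W} (h₁ : SES ι p) (h₂ : SES k e) (hκ : SES κ (e ≫ p))
    (hj : j ≫ κ = k) (hπ : π ≫ ι = κ ≫ e) : SES j π := by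
  have := h₁.mono
  have := h₂.mono
  have := h₂.epi
  have := hκ.mono
  have : Mono j := mono_of_mono_fac hj
  have : Epi π := by
    refine (epi_iff_surjective_up_to_refinements π).2 fun T w => ?_
    obtain ⟨T', σ, hσ, d, hd⟩ := surjective_up_to_refinements_of_epi e (w ≫ ι)
    obtain ⟨x, hx⟩ := hκ.lift d (by rw [← assoc, ← hd, assoc, assoc, h₁.w, comp_zero, comp_zero])
    exact ⟨T', σ, hσ, x, (cancel_mono ι).1 (by rw [assoc, hd, assoc, hπ, ← assoc, hx])⟩
  refine SES.of_lift ((cancel_mono ι).1 ?_) fun t ht => ?_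
  · rw [assoc, hπ, ← assoc, hj, h₂.w, zero_comp]
  · obtain ⟨y, hy⟩ := h₂.lift (t ≫ κ) (by rw [assoc, ← hπ, ← assoc, ht, zero_comp])
    exact ⟨y, (cancel_mono κ).1 (by rw [assoc, hj, hy])⟩

namespace Biexact

variable {𝒲 : Set C} {W B Q K D M : C} {ι : W ⟶ B} {p : B ⟶ Q} {k : K ⟶ D} {e : D ⟶ B}

lemma kernel_comp {κ : M ⟶ D} {j : K ⟶ M} {π : M ⟶ W} (h₁ : Biexact 𝒲 ι p)
    (h₂ : Biexact 𝒲 k e) (hκ : SES κ (e ≫ p)) (hj : j ≫ κ = k) (hπ : π ≫ ι = κ ≫ e) :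
    Biexact 𝒲 κ (e ≫ p) ∧ Biexact 𝒲 j π := by
  have := h₁.ses.mono
  have hjπ := h₁.ses.kernel_comp h₂.ses hκ hj hπ
  refine ⟨mk' hκ (fun T hT t => ?_) (fun T hT v => ?_),
    mk' hjπ (fun T hT t => ?_) (fun T hT v => ?_)⟩
  · obtain ⟨u, hu⟩ := h₁.lift hT t
    obtain ⟨u', hu'⟩ := h₂.lift hT u
    exact ⟨u', by rw [← assoc, hu', hu]⟩
  · -- extend `j ≫ v` along `k` to `w`; the defect `v - κ ≫ w` factors through `π`
    obtain ⟨w, hw⟩ := h₂.extend hT (j ≫ v)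
    obtain ⟨x, hx⟩ := hjπ.desc (v - κ ≫ w) (by rw [Preadditive.comp_sub, ← assoc, hj, hw, sub_self])
    obtain ⟨y, hy⟩ := h₁.extend hT x
    refine ⟨w + e ≫ y, ?_⟩
    rw [Preadditive.comp_add, ← assoc, ← hπ, assoc, hy, hx, add_sub_cancel]
  · obtain ⟨u, hu⟩ := h₂.lift hT (t ≫ ι)
    obtain ⟨u', hu'⟩ := hκ.lift u (by rw [← assoc, hu, assoc, h₁.ses.w, comp_zero])
    exact ⟨u', (cancel_mono ι).1 (by rw [assoc, hπ, ← assoc, hu', hu])⟩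
  · obtain ⟨w, hw⟩ := h₂.extend hT v
    exact ⟨κ ≫ w, by rw [← assoc, hj, hw]⟩

lemma exists_kernel_comp (h₁ : Biexact 𝒲 ι p) (h₂ : Biexact 𝒲 k e) :
    ∃ (M : C) (κ : M ⟶ D) (j : K ⟶ M) (π : M ⟶ W), Biexact 𝒲 κ (e ≫ p) ∧ Biexact 𝒲 j π := by
  have := h₁.ses.epi
  have := h₂.ses.epi
  obtain ⟨π, hπ⟩ := h₁.ses.lift (kernel.ι (e ≫ p) ≫ e) (by rw [assoc, kernel.condition])
  exact ⟨_, _, _, π, h₁.kernel_comp h₂ (SES.kernel_ι (e ≫ p)) (kernel.lift_ι _ k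
    (by rw [← assoc, h₂.ses.w, zero_comp])) hπ⟩

end Biexact

section Horseshoe

variable {𝒲 : Set C} {A B Q KA WA KC WC KB : C} {i : A ⟶ B} {p : B ⟶ Q}
  {gA : KA ⟶ WA} {fA : WA ⟶ A} {gC : KC ⟶ WC} {fC : WC ⟶ Q} {b : BinaryBicone WA WC}
  {fB : b.pt ⟶ B} {gB : KB ⟶ b.pt} {jA : KA ⟶ KB} {πC : KB ⟶ KC}

lemma epi_horseshoe [Epi fA] [Epi fC] (h : SES i p) (hinl : b.inl ≫ fB = fA ≫ i)
    (hinr : b.inr ≫ fB ≫ p = fC) : Epi fB := by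
  refine (Preadditive.epi_iff_cancel_zero fB).2 fun R t ht => ?_
  have hit : i ≫ t = 0 := by
    rw [← cancel_epi fA, comp_zero, ← assoc, ← hinl]
    simp only [assoc, ht, comp_zero]
  obtain ⟨t', rfl⟩ := h.desc t hit
  have ht' : t' = 0 := by
    rw [← cancel_epi fC, ← hinr, comp_zero]
    simp only [assoc, ht, comp_zero]
  rw [ht', comp_zero]

lemma SES.horseshoe_kernels (h : SES i p) (hA : SES gA fA) (hC : SES gC fC)
    (hb : b.fst ≫ b.inl + b.snd ≫ b.inr = 𝟙 b.pt) (hinl : b.inl ≫ fB = fA ≫ i)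
    (hinr : b.inr ≫ fB ≫ p = fC) (hB : SES gB fB) (hjA : jA ≫ gB = gA ≫ b.inl)
    (hπC : πC ≫ gC = gB ≫ b.snd) : SES jA πC := by
  have := h.mono
  have := hA.mono
  have := hA.epi
  have := hB.mono
  have := hC.mono
  have : Mono b.inl := mono_of_mono_fac b.inl_fst
  have : Mono jA := mono_of_mono_fac hjA
  have hsplit : SES b.inl b.snd :=
    SES.of_splitting (S := .mk b.inl b.snd b.inl_snd) ⟨b.fst, b.inr, b.inl_fst, b.inr_snd, hb⟩
  have : Epi πC := by
    refine (epi_iff_surjective_up_to_refinements πC).2 fun T c => ?_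
    obtain ⟨a, ha⟩ := h.lift (c ≫ gC ≫ b.inr ≫ fB) (by simp only [assoc, hinr, hC.w, comp_zero])
    obtain ⟨T', σ, hσ, wa, hwa⟩ := surjective_up_to_refinements_of_epi fA a
    obtain ⟨x, hx⟩ := hB.lift (σ ≫ c ≫ gC ≫ b.inr - wa ≫ b.inl) (by
      simp only [Preadditive.sub_comp, assoc, hinl]
      rw [← ha, ← reassoc_of% hwa, sub_self])
    refine ⟨T', σ, hσ, x, (cancel_mono gC).1 ?_⟩
    rw [assoc, assoc, hπC, ← assoc x, hx]
    simp
  refine SES.of_lift ((cancel_mono gC).1 ?_) fun t ht => ?_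
  · rw [assoc, hπC, ← assoc, hjA]
    simp
  · obtain ⟨w, hw⟩ := hsplit.lift (t ≫ gB) (by rw [assoc, ← hπC, ← assoc, ht, zero_comp])
    have hwfA : w ≫ fA = 0 := (cancel_mono i).1 (by
      rw [assoc, ← hinl, ← assoc, hw, assoc, hB.w, comp_zero, zero_comp])
    obtain ⟨ka, hka⟩ := hA.lift w hwfA
    exact ⟨ka, (cancel_mono gB).1 (by rw [assoc, hjA, ← assoc, hka, hw])⟩

lemma Biexact.horseshoe_mid (h : Biexact 𝒲 i p) (hA : Biexact 𝒲 gA fA) (hC : Biexact 𝒲 gC fC)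
    (hinl : b.inl ≫ fB = fA ≫ i) (hinr : b.inr ≫ fB ≫ p = fC) (hB : SES gB fB)
    (hjA : jA ≫ gB = gA ≫ b.inl) (hπC : πC ≫ gC = gB ≫ b.snd) (hjπ : SES jA πC) :
    Biexact 𝒲 gB fB := by
  refine .mk' hB (fun T hT t => ?_) (fun T hT v => ?_)
  · obtain ⟨u, hu⟩ := hC.lift hT (t ≫ p)
    obtain ⟨v, hv⟩ := h.ses.lift (t - u ≫ b.inr ≫ fB) (by
      rw [Preadditive.sub_comp, assoc, assoc, hinr, hu, sub_self])
    obtain ⟨w, hw⟩ := hA.lift hT v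
    refine ⟨w ≫ b.inl + u ≫ b.inr, ?_⟩
    rw [Preadditive.add_comp, assoc, hinl, ← assoc, hw, hv, assoc, sub_add_cancel]
  · -- correct the extension `b.fst ≫ w` of `jA ≫ v` on the `WC` summand
    obtain ⟨w, hw⟩ := hA.extend hT (jA ≫ v)
    obtain ⟨x, hx⟩ := hjπ.desc (v - gB ≫ b.fst ≫ w) (by
      rw [Preadditive.comp_sub, reassoc_of% hjA, b.inl_fst_assoc, hw, sub_self])
    obtain ⟨y, hy⟩ := hC.extend hT x
    refine ⟨b.fst ≫ w + b.snd ≫ y, ?_⟩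
    rw [Preadditive.comp_add, ← assoc gB b.snd, ← hπC, assoc, hy, hx, add_sub_cancel]

lemma Biexact.horseshoe_kernels (h : Biexact 𝒲 i p) (hA : Biexact 𝒲 gA fA)
    (hC : Biexact 𝒲 gC fC) (hinl : b.inl ≫ fB = fA ≫ i) (hinr : b.inr ≫ fB ≫ p = fC)
    (hB : SES gB fB) (hjA : jA ≫ gB = gA ≫ b.inl) (hπC : πC ≫ gC = gB ≫ b.snd)
    (hjπ : SES jA πC) : Biexact 𝒲 jA πC := by
  have := hC.ses.mono
  refine .mk' hjπ (fun T hT t => ?_) (fun T hT v => ?_)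
  · obtain ⟨v, hv⟩ := h.ses.lift (t ≫ gC ≫ b.inr ≫ fB) (by
      simp only [assoc, hinr, hC.ses.w, comp_zero])
    obtain ⟨w, hw⟩ := hA.lift hT v
    obtain ⟨s, hs⟩ := hB.lift (t ≫ gC ≫ b.inr - w ≫ b.inl) (by
      simp only [Preadditive.sub_comp, assoc, hinl]
      rw [← hv, ← hw, assoc, sub_self])
    refine ⟨s, (cancel_mono gC).1 ?_⟩
    rw [assoc, hπC, ← assoc, hs]
    simp
  · obtain ⟨w, hw⟩ := hA.extend hT v
    exact ⟨gB ≫ b.fst ≫ w, by rw [reassoc_of% hjA, b.inl_fst_assoc, hw]⟩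

lemma Biexact.exists_horseshoe (h : Biexact 𝒲 i p) (hA : Biexact 𝒲 gA fA)
    (hC : Biexact 𝒲 gC fC) (hWC : WC ∈ 𝒲) (hb : b.IsBilimit) :
    ∃ (KB : C) (gB : KB ⟶ b.pt) (fB : b.pt ⟶ B) (jA : KA ⟶ KB) (πC : KB ⟶ KC),
      Biexact 𝒲 gB fB ∧ Biexact 𝒲 jA πC := by
  have := hA.ses.epi
  have := hC.ses.epi
  obtain ⟨l, hl⟩ := h.lift hWC fC
  set fB := b.fst ≫ fA ≫ i + b.snd ≫ l
  have hinl : b.inl ≫ fB = fA ≫ i := by simp [fB]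
  have hinr : b.inr ≫ fB ≫ p = fC := by simp [fB, hl]
  have hfB : fB ≫ p = b.snd ≫ fC := by simp [fB, hl, h.ses.w]
  have := epi_horseshoe h.ses hinl hinr
  obtain ⟨πC, hπC⟩ := hC.ses.lift (kernel.ι fB ≫ b.snd) (by
    rw [assoc, ← hfB, kernel.condition_assoc, zero_comp])
  have hjA := kernel.lift_ι fB (gA ≫ b.inl) (by rw [assoc, hinl, hA.ses.w_assoc])
  have hjπ := SES.horseshoe_kernels h.ses hA.ses hC.ses (IsBilimit.binary_total hb) hinl hinr
    (SES.kernel_ι fB) hjA hπC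
  exact ⟨_, _, fB, _, πC, h.horseshoe_mid hA hC hinl hinr (SES.kernel_ι fB) hjA hπC hjπ,
    h.horseshoe_kernels hA hC hinl hinr (SES.kernel_ι fB) hjA hπC hjπ⟩

end Horseshoe

namespace Biexact

variable {𝒲 : Set C} {A B Z : C} {f : A ⟶ B} {g : B ⟶ Z}

lemma hasBiexactRes_mid (h : Biexact 𝒲 f g) (h𝒲 : ClosedUnderBiprod 𝒲)
    (hA : HasBiexactRes 𝒲 A) (hZ : HasBiexactRes 𝒲 Z) : HasBiexactRes 𝒲 B := by
  refine HasBiexactRes.coinduct (S := fun B => ∃ (A Z : C) (f : A ⟶ B) (g : B ⟶ Z),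
    Biexact 𝒲 f g ∧ HasBiexactRes 𝒲 A ∧ HasBiexactRes 𝒲 Z) ?_ ⟨A, Z, f, g, h, hA, hZ⟩
  rintro B ⟨A, Z, f, g, h, hA, hZ⟩
  obtain ⟨WA, KA, gA, fA, hWA, hKA, hA⟩ := hA.step
  obtain ⟨WZ, KZ, gZ, fZ, hWZ, hKZ, hZ⟩ := hZ.step
  obtain ⟨b, ⟨hb⟩, hpt⟩ := h𝒲 hWA hWZ
  obtain ⟨KB, gB, fB, j, π, hB, hK⟩ := h.exists_horseshoe hA hZ hWZ hb
  exact ⟨b.pt, KB, gB, fB, hpt, ⟨KA, KZ, j, π, hK, hKA, hKZ⟩, hB⟩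

lemma hasBiexactRes_right (h : Biexact 𝒲 f g) (h𝒲 : ClosedUnderBiprod 𝒲)
    (hA : HasBiexactRes 𝒲 A) (hB : HasBiexactRes 𝒲 B) : HasBiexactRes 𝒲 Z := by
  obtain ⟨W, K, k, e, hW, hK, hB⟩ := hB.step
  obtain ⟨M, κ, j, π, hκ, hjπ⟩ := h.exists_kernel_comp hB
  exact .of_step ⟨W, M, κ, e ≫ g, hW, hjπ.hasBiexactRes_mid h𝒲 hK hA, hκ⟩

/-- Pull back along the first step `e : W → Z` of a resolution of `Z`: the pullback `V` is an
extension of `B` by a syzygy of `Z`, and, as `e` lifts along `g`, also `V ≅ A ⊕ W`, so that `A`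
is a quotient of `V` by `W`. -/
lemma hasBiexactRes_left (h : Biexact 𝒲 f g) (h𝒲 : ClosedUnderBiprod 𝒲)
    (hB : HasBiexactRes 𝒲 B) (hZ : HasBiexactRes 𝒲 Z) : HasBiexactRes 𝒲 A := by
  obtain ⟨W, K, k, e, hW, hK, hZ⟩ := hZ.step
  have hP := IsPullback.of_hasPullback g e
  obtain ⟨_, -, hV⟩ := hZ.pullback hP.flip
  obtain ⟨_, -, hVW⟩ := h.pullback hP
  obtain ⟨u, hu⟩ := h.lift hW e
  obtain ⟨r, hsr⟩ := hVW.ses.exists_biexact_of_section (𝒲 := 𝒲) (hP.lift_snd u (𝟙 W) (by simp [hu]))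
  exact hsr.hasBiexactRes_right h𝒲 (.of_mem h𝒲 hW) (hV.hasBiexactRes_mid h𝒲 hK hB)

lemma memGW_left (h : Biexact 𝒲 f g) (h𝒲 : ClosedUnderBiprod 𝒲) (hB : MemGW 𝒲 B)
    (hZ : MemGW 𝒲 Z) : MemGW 𝒲 A :=
  ⟨h.hasBiexactRes_left h𝒲 hB.1 hZ.1,
    HasBiexactCores.of_res_op <|
      h.op.hasBiexactRes_right h𝒲.op (HasBiexactCores.op hZ.2) (HasBiexactCores.op hB.2)⟩

lemma memGW_right (h : Biexact 𝒲 f g) (h𝒲 : ClosedUnderBiprod 𝒲) (hA : MemGW 𝒲 A)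
    (hB : MemGW 𝒲 B) : MemGW 𝒲 Z :=
  ⟨h.hasBiexactRes_right h𝒲 hA.1 hB.1,
    HasBiexactCores.of_res_op <|
      h.op.hasBiexactRes_left h𝒲.op (HasBiexactCores.op hB.2) (HasBiexactCores.op hA.2)⟩

end Biexact

theorem stmt_15_general (𝒲 : Set C)
    (hsum : ∀ {U V : C}, U ∈ 𝒲 → V ∈ 𝒲 → (U ⊞ V) ∈ 𝒲)
    {X Y Z : C} (f : X ⟶ Y) (g : Y ⟶ Z)
    (hses : SES f g) (hcov : CovExact 𝒲 f g) (hcon : ContraExact 𝒲 f g)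
    (hY : MemGW 𝒲 Y) :
    MemGW 𝒲 X ↔ MemGW 𝒲 Z := by
  have h : Biexact 𝒲 f g := ⟨hses, hcov, hcon⟩
  have h𝒲 := closedUnderBiprod_of_biprod_mem hsum
  exact ⟨fun hX => h.memGW_right h𝒲 hX hY, fun hZ => h.memGW_left h𝒲 hY hZ⟩

/-- If `0→X→Y→Z→0` is both `Hom(𝒲,-)`-exact and `Hom(-,𝒲)`-exact and
`Y ∈ G(𝒲)`, then `X ∈ G(𝒲)` if and only if `Z ∈ G(𝒲)`. -/
theorem stmt_15 (𝒲 : Set C)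
    (hiso : ∀ {U V : C}, (U ≅ V) → U ∈ 𝒲 → V ∈ 𝒲)
    (hsum : ∀ {U V : C}, U ∈ 𝒲 → V ∈ 𝒲 → (U ⊞ V) ∈ 𝒲)
    {X Y Z : C} (f : X ⟶ Y) (g : Y ⟶ Z)
    (hses : SES f g) (hcov : CovExact 𝒲 f g) (hcon : ContraExact 𝒲 f g)
    (hY : MemGW 𝒲 Y) :
    MemGW 𝒲 X ↔ MemGW 𝒲 Z :=
  stmt_15_general 𝒲 hsum f g hses hcov hcon hY
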